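/- (Unwinding condition for observable steps of the abstract IFC machine.) Let o be an observer label. If abstract machine states s₁ ≈ˢ_o s₂ are indistinguishable, s₁ is observable to o, s₁ steps with action α₁ to s₁', and s₂ steps with action α₂ to s₂', then α₁ ≈ᵃ_o α₂ and s₁' ≈ˢ_o s₂'. -/
import Mathlib


/-! ### Generic machines, traces, refinement, observation, TINI -/

/-- A generic machine: states, events, inputs, a step relation (with optional
event; `none` is the silent action τ), and an initialization function. -/
structure Machine (S E I : Type) where
  step : S → Option E → S → Prop
  init : I → S

/-- `Traces step s t s'`: the machine runs from `s` to `s'` emitting the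
(non-silent) events collected in the list `t`. -/
inductive Traces {S E : Type} (step : S → Option E → S → Prop) : S → List E → S → Prop
  | nil (s : S) : Traces step s [] s
  | event {s₁ s₂ s₃ : S} {e : E} {t : List E} :
      step s₁ (some e) s₂ → Traces step s₂ t s₃ → Traces step s₁ (e :: t) s₃
  | silent {s₁ s₂ s₃ : S} {t : List E} :
      step s₁ none s₂ → Traces step s₂ t s₃ → Traces step s₁ t s₃

/-- `Emits step s t`: from `s` the machine can emit the trace `t`. -/
def Emits {S E : Type} (step : S → Option E → S → Prop) (s : S) (t : List E) : Prop :=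
  ∃ s', Traces step s t s'

/-- Refinement of `M₁` into `M₂` via relations on inputs and events. -/
def Refinement {S₁ E₁ I₁ S₂ E₂ I₂ : Type} (M₁ : Machine S₁ E₁ I₁) (M₂ : Machine S₂ E₂ I₂)
    (Ri : I₁ → I₂ → Prop) (Re : E₁ → E₂ → Prop) : Prop :=
  ∀ i₁ i₂ t₂, Ri i₁ i₂ → Emits M₂.step (M₂.init i₂) t₂ →
    ∃ t₁, Emits M₁.step (M₁.init i₁) t₁ ∧ List.Forall₂ Re t₁ t₂

/-- Refinement via states. -/
def StateRefinement {S₁ E₁ I₁ S₂ E₂ I₂ : Type} (M₁ : Machine S₁ E₁ I₁) (M₂ : Machine S₂ E₂ I₂)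
    (Rs : S₁ → S₂ → Prop) (Re : E₁ → E₂ → Prop) : Prop :=
  ∀ s₁ s₂ t₂, Rs s₁ s₂ → Emits M₂.step s₂ t₂ →
    ∃ t₁, Emits M₁.step s₁ t₁ ∧ List.Forall₂ Re t₁ t₂

open Classical in
/-- Filter the unobservable events out of a trace. -/
noncomputable def filterObs {E : Type} (obs : E → Prop) : List E → List E
  | [] => []
  | e :: t => if obs e then e :: filterObs obs t else filterObs obs t

/-- Indistinguishability of traces: pairwise equal up to the length of the shorter. -/
inductive IndistTrace {E : Type} : List E → List E → Prop
  | nilL (t : List E) : IndistTrace [] t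
  | nilR (t : List E) : IndistTrace t []
  | cons (e : E) {t₁ t₂ : List E} : IndistTrace t₁ t₂ → IndistTrace (e :: t₁) (e :: t₂)

/-- Observability of actions: silent actions are never observable. -/
def ObsAct {E : Type} (obs : E → Prop) (α : Option E) : Prop :=
  ∃ e, α = some e ∧ obs e

/-- Indistinguishability of actions: equal, or both unobservable. -/
def ActIndist {E : Type} (obs : E → Prop) (α₁ α₂ : Option E) : Prop :=
  α₁ = α₂ ∨ (¬ ObsAct obs α₁ ∧ ¬ ObsAct obs α₂)

/-- Indistinguishability of events: equal, or both unobservable. -/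
def EvIndist {E : Type} (obs : E → Prop) (e₁ e₂ : E) : Prop :=
  e₁ = e₂ ∨ (¬ obs e₁ ∧ ¬ obs e₂)

/-- Termination-insensitive noninterference for a machine with a notion of
observation `(Ω, obsE, indistI)`. -/
def TINI {S E I Ω : Type} (M : Machine S E I)
    (obsE : Ω → E → Prop) (indistI : Ω → I → I → Prop) : Prop :=
  ∀ o i₁ i₂ t₁ t₂, indistI o i₁ i₂ →
    Emits M.step (M.init i₁) t₁ → Emits M.step (M.init i₂) t₂ →
    IndistTrace (filterObs (obsE o) t₁) (filterObs (obsE o) t₂)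

/-! ### The abstract IFC machine -/

/-- Labeled atoms: an integer payload together with an IFC label. -/
structure Atom (L : Type) where
  val : ℤ
  lab : L

/-- The instruction set (shared by all machines). -/
inductive Instr : Type where
  | add
  | push (m : ℤ)
  | load
  | store
  | jump
  | bnz (k : ℤ)
  | call
  | ret
  | output

/-- Instruction memories. -/
abbrev InstrMem : Type := ℤ → Option Instr

/-- Stack elements: data atoms or return frames. -/
inductive StkElt (L : Type) : Type where
  | data : Atom L → StkElt L
  | ret : Atom L → StkElt L

/-- Abstract machine states: data memory, stack, program counter. -/
structure AState (L : Type) where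
  mem : ℤ → Option (Atom L)
  stk : List (StkElt L)
  pc : Atom L

/-- Memory update. -/
def updMem {L : Type} (μ : ℤ → Option (Atom L)) (p : ℤ) (a : Atom L) :
    ℤ → Option (Atom L) :=
  fun q => if q = p then some a else μ q

section Abstract

variable {L : Type} [SemilatticeSup L] [OrderBot L]

/-- The step relation of the abstract IFC machine, with fixed instruction
memory `ι`.  Actions are `Option (Atom L)`: `none` is silent, `some a` emits
the event `a`. -/
inductive AStep (ι : InstrMem) : AState L → Option (Atom L) → AState L → Prop
  | add {μ : ℤ → Option (Atom L)} {σ : List (StkElt L)} {n n₁ n₂ : ℤ} {Lpc L₁ L₂ : L} :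
      ι n = some .add →
      AStep ι ⟨μ, .data ⟨n₁, L₁⟩ :: .data ⟨n₂, L₂⟩ :: σ, ⟨n, Lpc⟩⟩ none
              ⟨μ, .data ⟨n₁ + n₂, L₁ ⊔ L₂⟩ :: σ, ⟨n + 1, Lpc⟩⟩
  | push {μ : ℤ → Option (Atom L)} {σ : List (StkElt L)} {n m : ℤ} {Lpc : L} :
      ι n = some (.push m) →
      AStep ι ⟨μ, σ, ⟨n, Lpc⟩⟩ none ⟨μ, .data ⟨m, ⊥⟩ :: σ, ⟨n + 1, Lpc⟩⟩
  | load {μ : ℤ → Option (Atom L)} {σ : List (StkElt L)} {n p m : ℤ} {Lpc L₁ L₂ : L} :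
      ι n = some .load → μ p = some ⟨m, L₂⟩ →
      AStep ι ⟨μ, .data ⟨p, L₁⟩ :: σ, ⟨n, Lpc⟩⟩ none
              ⟨μ, .data ⟨m, L₁ ⊔ L₂⟩ :: σ, ⟨n + 1, Lpc⟩⟩
  | store {μ : ℤ → Option (Atom L)} {σ : List (StkElt L)} {n p m k : ℤ}
      {Lpc L₁ L₂ L₃ : L} :
      ι n = some .store → μ p = some ⟨k, L₃⟩ → L₁ ⊔ Lpc ≤ L₃ →
      AStep ι ⟨μ, .data ⟨p, L₁⟩ :: .data ⟨m, L₂⟩ :: σ, ⟨n, Lpc⟩⟩ none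
              ⟨updMem μ p ⟨m, L₁ ⊔ L₂ ⊔ Lpc⟩, σ, ⟨n + 1, Lpc⟩⟩
  | jump {μ : ℤ → Option (Atom L)} {σ : List (StkElt L)} {n n' : ℤ} {Lpc L₁ : L} :
      ι n = some .jump →
      AStep ι ⟨μ, .data ⟨n', L₁⟩ :: σ, ⟨n, Lpc⟩⟩ none ⟨μ, σ, ⟨n', L₁ ⊔ Lpc⟩⟩
  | bnz {μ : ℤ → Option (Atom L)} {σ : List (StkElt L)} {n m k : ℤ} {Lpc L₁ : L} :
      ι n = some (.bnz k) →
      AStep ι ⟨μ, .data ⟨m, L₁⟩ :: σ, ⟨n, Lpc⟩⟩ none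
              ⟨μ, σ, ⟨n + (if m = 0 then 1 else k), L₁ ⊔ Lpc⟩⟩
  | call {μ : ℤ → Option (Atom L)} {σ : List (StkElt L)} {n n' : ℤ} {Lpc L₁ : L} :
      ι n = some .call →
      AStep ι ⟨μ, .data ⟨n', L₁⟩ :: σ, ⟨n, Lpc⟩⟩ none
              ⟨μ, .ret ⟨n + 1, Lpc⟩ :: σ, ⟨n', L₁ ⊔ Lpc⟩⟩
  | ret {μ : ℤ → Option (Atom L)} {σ : List (StkElt L)} {n : ℤ} {Lpc : L} {pc' : Atom L} :
      ι n = some .ret →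
      AStep ι ⟨μ, .ret pc' :: σ, ⟨n, Lpc⟩⟩ none ⟨μ, σ, pc'⟩
  | output {μ : ℤ → Option (Atom L)} {σ : List (StkElt L)} {n m : ℤ} {Lpc L₁ : L} :
      ι n = some .output →
      AStep ι ⟨μ, .data ⟨m, L₁⟩ :: σ, ⟨n, Lpc⟩⟩ (some ⟨m, L₁ ⊔ Lpc⟩)
              ⟨μ, σ, ⟨n + 1, Lpc⟩⟩

/-- Indistinguishability of atoms at observer `o`: equal, or both unobservable. -/
def AtomIndist (o : L) (a₁ a₂ : Atom L) : Prop :=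
  a₁ = a₂ ∨ (¬ a₁.lab ≤ o ∧ ¬ a₂.lab ≤ o)

/-- Pointwise indistinguishability of memories. -/
def MemIndist (o : L) (μ₁ μ₂ : ℤ → Option (Atom L)) : Prop :=
  ∀ p, Option.Rel (AtomIndist o) (μ₁ p) (μ₂ p)

/-- Indistinguishability of stack elements: data matches data, return frames
match return frames, componentwise. -/
inductive EltIndist (o : L) : StkElt L → StkElt L → Prop
  | data {a₁ a₂ : Atom L} : AtomIndist o a₁ a₂ → EltIndist o (.data a₁) (.data a₂)
  | ret {a₁ a₂ : Atom L} : AtomIndist o a₁ a₂ → EltIndist o (.ret a₁) (.ret a₂)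

open Classical in
/-- Stack filtering: drop data atoms and unobservable return frames, keeping the
whole remaining stack at the first observable return frame. -/
noncomputable def stkFilter (o : L) : List (StkElt L) → List (StkElt L)
  | [] => []
  | .data _ :: σ => stkFilter o σ
  | .ret a :: σ => if a.lab ≤ o then .ret a :: σ else stkFilter o σ

/-- A state is observable when the label of its pc flows to the observer. -/
def StateObs (o : L) (s : AState L) : Prop := s.pc.lab ≤ o

/-- Indistinguishability of abstract machine states. -/
def StateIndist (o : L) (s₁ s₂ : AState L) : Prop :=
  (s₁.pc.lab ≤ o ∧ s₂.pc.lab ≤ o ∧ s₁.pc = s₂.pc ∧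
    List.Forall₂ (EltIndist o) s₁.stk s₂.stk ∧ MemIndist o s₁.mem s₂.mem) ∨
  (¬ s₁.pc.lab ≤ o ∧ ¬ s₂.pc.lab ≤ o ∧ MemIndist o s₁.mem s₂.mem ∧
    List.Forall₂ (EltIndist o) (stkFilter o s₁.stk) (stkFilter o s₂.stk))

/-- Input data for the abstract machine: program, initial stack of atoms,
memory size, initial label. -/
structure AInput (L : Type) where
  prog : InstrMem
  args : List (Atom L)
  size : ℕ
  lab : L

/-- Initial state for the abstract machine: the program is loaded as the
instruction memory, the memory consists of `size` copies of `0 @ lab`, the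
stack holds the arguments, and the pc is `0 @ lab`. -/
def aInit (i : AInput L) : InstrMem × AState L :=
  (i.prog,
   ⟨fun q => if 0 ≤ q ∧ q < (i.size : ℤ) then some ⟨0, i.lab⟩ else none,
    i.args.map .data, ⟨0, i.lab⟩⟩)

/-- The abstract machine step relation as a generic machine step (the fixed
instruction memory is part of the state and is preserved). -/
def AStepP : (InstrMem × AState L) → Option (Atom L) → (InstrMem × AState L) → Prop :=
  fun s α s' => s'.1 = s.1 ∧ AStep s.1 s.2 α s'.2

/-- Indistinguishability of abstract inputs: same program, memory size and
initial label, pointwise indistinguishable argument lists. -/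
def AInputIndist (o : L) (i₁ i₂ : AInput L) : Prop :=
  i₁.prog = i₂.prog ∧ i₁.size = i₂.size ∧ i₁.lab = i₂.lab ∧
  List.Forall₂ (AtomIndist o) i₁.args i₂.args

/-- The abstract IFC machine as a generic machine. -/
def AMachine (L : Type) [SemilatticeSup L] [OrderBot L] :
    Machine (InstrMem × AState L) (Atom L) (AInput L) :=
  ⟨AStepP, aInit⟩

end Abstract
section UnwindHelpers

variable {L : Type} [SemilatticeSup L] [OrderBot L]

lemma notLeSupL {o l l' : L} (h : ¬ l ≤ o) : ¬ l ⊔ l' ≤ o :=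
  fun hh => h (le_sup_left.trans hh)

lemma notLeSupR {o l l' : L} (h : ¬ l' ≤ o) : ¬ l ⊔ l' ≤ o :=
  fun hh => h (le_sup_right.trans hh)

lemma stkFilter_indist {o : L} {σ₁ σ₂ : List (StkElt L)}
    (h : List.Forall₂ (EltIndist o) σ₁ σ₂) :
    List.Forall₂ (EltIndist o) (stkFilter o σ₁) (stkFilter o σ₂) := by
  induction h with
  | nil => simp [stkFilter]
  | @cons a b l₁ l₂ he ht ih =>
    cases he with
    | data _ => simpa [stkFilter] using ih
    | @ret a₁ a₂ ha =>
      rcases ha with rfl | ⟨h1, h2⟩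
      · by_cases hl : a₁.lab ≤ o
        · simpa [stkFilter, hl] using List.Forall₂.cons (EltIndist.ret (Or.inl rfl)) ht
        · simpa [stkFilter, hl] using ih
      · simpa [stkFilter, h1, h2] using ih

lemma atomIndist_join {o : L} {v₁ v₂ v₁' v₂' : ℤ} {l₁ l₂ l₁' l₂' : L} (f : ℤ → ℤ → ℤ)
    (h1 : AtomIndist o ⟨v₁, l₁⟩ ⟨v₁', l₁'⟩) (h2 : AtomIndist o ⟨v₂, l₂⟩ ⟨v₂', l₂'⟩) :
    AtomIndist o ⟨f v₁ v₂, l₁ ⊔ l₂⟩ ⟨f v₁' v₂', l₁' ⊔ l₂'⟩ := by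
  rcases h1 with h1 | ⟨ha, hb⟩
  · rcases h2 with h2 | ⟨hc, hd⟩
    · injection h1 with e1 e2; injection h2 with e3 e4; subst e1; subst e2; subst e3; subst e4
      exact Or.inl rfl
    · exact Or.inr ⟨notLeSupR hc, notLeSupR hd⟩
  · exact Or.inr ⟨notLeSupL ha, notLeSupL hb⟩

lemma memRel_high {o : L} {μ₁ μ₂ : ℤ → Option (Atom L)} (hmem : MemIndist o μ₁ μ₂)
    {p k : ℤ} {L₃ : L} (h : μ₁ p = some ⟨k, L₃⟩) (hk : ¬ L₃ ≤ o) :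
    ∃ b : Atom L, μ₂ p = some b ∧ ¬ b.lab ≤ o := by
  have hr := hmem p
  rw [h] at hr
  cases hb2 : μ₂ p with
  | none => rw [hb2] at hr; cases hr
  | some b =>
    rw [hb2] at hr
    cases hr with | some hab =>
    rcases hab with rfl | ⟨_, hb⟩
    · exact ⟨_, rfl, hk⟩
    · exact ⟨b, rfl, hb⟩

lemma memRel_high' {o : L} {μ₁ μ₂ : ℤ → Option (Atom L)} (hmem : MemIndist o μ₁ μ₂)
    {p k : ℤ} {L₃ : L} (h : μ₂ p = some ⟨k, L₃⟩) (hk : ¬ L₃ ≤ o) :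
    ∃ b : Atom L, μ₁ p = some b ∧ ¬ b.lab ≤ o := by
  have hr := hmem p
  rw [h] at hr
  cases hb2 : μ₁ p with
  | none => rw [hb2] at hr; cases hr
  | some b =>
    rw [hb2] at hr
    cases hr with | some hab =>
    rcases hab with hh | ⟨hb, _⟩
    · exact ⟨b, rfl, fun hle => hk (by subst hh; exact hle)⟩
    · exact ⟨b, rfl, hb⟩

lemma stkFilter_ret_low {o : L} {a : Atom L} (h : a.lab ≤ o) (σ : List (StkElt L)) :
    stkFilter o (.ret a :: σ) = .ret a :: σ := by
  simp [stkFilter, h]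

end UnwindHelpers

/-- Unwinding condition for observable steps of the abstract IFC
machine: from indistinguishable states, with the first observable, any two steps
produce indistinguishable actions and indistinguishable states. -/
theorem abstract_unwinding_observable {L : Type} [SemilatticeSup L] [OrderBot L]
    (ι : InstrMem) (o : L) (s₁ s₂ s₁' s₂' : AState L) (α₁ α₂ : Option (Atom L))
    (hind : StateIndist o s₁ s₂) (hobs : StateObs o s₁)
    (h₁ : AStep ι s₁ α₁ s₁') (h₂ : AStep ι s₂ α₂ s₂') :
    ActIndist (fun a : Atom L => a.lab ≤ o) α₁ α₂ ∧ StateIndist o s₁' s₂' := by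
  rcases hind with ⟨hL1, hL2, hpc, hstk, hmem⟩ | ⟨hns, _⟩
  case inr => exact absurd hobs hns
  cases h₁ with
  | add hι₁ =>
    rename_i μ σ n n₁ n₂ Lpc L₁ L₂
    cases h₂
    case add =>
      rename_i μ' σ' n' n₁' n₂' Lpc' L₁' L₂' hι₂
      injection hpc with hn hl; subst hn; subst hl
      dsimp only at hL1 hL2 hstk hmem
      obtain ⟨he1, hsA⟩ := List.forall₂_cons.1 hstk
      obtain ⟨he2, hsB⟩ := List.forall₂_cons.1 hsA
      cases he1 with | data ha1 =>
      cases he2 with | data ha2 =>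
      exact ⟨Or.inl rfl, Or.inl ⟨hL1, hL1, rfl,
        List.Forall₂.cons (.data (atomIndist_join (· + ·) ha1 ha2)) hsB, hmem⟩⟩
    all_goals (injection hpc with hn hl; subst hn; simp_all)
  | push hι₁ =>
    rename_i μ σ n m Lpc
    cases h₂
    case push =>
      rename_i μ' σ' n' m' Lpc' hι₂
      injection hpc with hn hl; subst hn; subst hl
      dsimp only at hL1 hL2 hstk hmem
      rw [hι₁] at hι₂
      injection hι₂ with h; injection h with h; subst h
      exact ⟨Or.inl rfl, Or.inl ⟨hL1, hL1, rfl,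
        List.Forall₂.cons (.data (Or.inl rfl)) hstk, hmem⟩⟩
    all_goals (injection hpc with hn hl; subst hn; simp_all)
  | load hι₁ hμ =>
    rename_i μ σ n p m Lpc L₁ L₂
    cases h₂
    case load =>
      rename_i μ' σ' n' p' m' Lpc' L₁' L₂' hι₂ hμ'
      injection hpc with hn hl; subst hn; subst hl
      dsimp only at hL1 hL2 hstk hmem
      obtain ⟨he1, hsA⟩ := List.forall₂_cons.1 hstk
      cases he1 with | data ha1 =>
      refine ⟨Or.inl rfl, Or.inl ⟨hL1, hL1, rfl, List.Forall₂.cons (.data ?_) hsA, hmem⟩⟩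
      rcases ha1 with heq | ⟨hh1, hh2⟩
      · injection heq with e1 e2; subst e1; subst e2
        have hr := hmem p
        rw [hμ, hμ'] at hr
        cases hr with | some hab =>
        rcases hab with heq2 | ⟨hx, hy⟩
        · injection heq2 with e3 e4; subst e3; subst e4; exact Or.inl rfl
        · exact Or.inr ⟨notLeSupR hx, notLeSupR hy⟩
      · exact Or.inr ⟨notLeSupL hh1, notLeSupL hh2⟩
    all_goals (injection hpc with hn hl; subst hn; simp_all)
  | store hι₁ hμ hle =>
    rename_i μ σ n p m k Lpc L₁ L₂ L₃
    cases h₂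
    case store =>
      rename_i μ' σ' n' p' m' k' Lpc' L₁' L₂' L₃' hι₂ hμ' hle'
      injection hpc with hn hl; subst hn; subst hl
      dsimp only at hL1 hL2 hstk hmem
      obtain ⟨he1, hsA⟩ := List.forall₂_cons.1 hstk
      obtain ⟨he2, hsB⟩ := List.forall₂_cons.1 hsA
      cases he1 with | data ha1 =>
      cases he2 with | data ha2 =>
      refine ⟨Or.inl rfl, Or.inl ⟨hL1, hL1, rfl, hsB, ?_⟩⟩
      rcases ha1 with heq | ⟨hh1, hh2⟩
      · injection heq with e1 e2; subst e1; subst e2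
        rcases ha2 with heq2 | ⟨hx, hy⟩
        · injection heq2 with e3 e4; subst e3; subst e4
          intro q
          by_cases hq : q = p
          · simp only [updMem, hq, if_pos rfl]
            exact Option.Rel.some (Or.inl rfl)
          · simpa only [updMem, if_neg hq] using hmem q
        · intro q
          by_cases hq : q = p
          · simp only [updMem, hq, if_pos rfl]
            exact Option.Rel.some (Or.inr ⟨notLeSupL (notLeSupR hx), notLeSupL (notLeSupR hy)⟩)
          · simpa only [updMem, if_neg hq] using hmem q
      · have hk3 : ¬ L₃ ≤ o := fun h => hh1 ((le_sup_left.trans hle).trans h)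
        have hk3' : ¬ L₃' ≤ o := fun h => hh2 ((le_sup_left.trans hle').trans h)
        have hn1 : ¬ L₁ ⊔ L₂ ⊔ Lpc ≤ o := notLeSupL (notLeSupL hh1)
        have hn2 : ¬ L₁' ⊔ L₂' ⊔ Lpc ≤ o := notLeSupL (notLeSupL hh2)
        intro q
        by_cases hq : q = p <;> by_cases hq' : q = p'
        · simp only [updMem, if_pos hq, if_pos hq']
          exact Option.Rel.some (Or.inr ⟨hn1, hn2⟩)
        · subst hq
          obtain ⟨b, hb, hbl⟩ := memRel_high hmem hμ hk3
          simp only [updMem, if_pos rfl, if_neg hq', hb]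
          exact Option.Rel.some (Or.inr ⟨hn1, hbl⟩)
        · subst hq'
          obtain ⟨b, hb, hbl⟩ := memRel_high' hmem hμ' hk3'
          simp only [updMem, if_pos rfl, if_neg hq, hb]
          exact Option.Rel.some (Or.inr ⟨hbl, hn2⟩)
        · simpa only [updMem, if_neg hq, if_neg hq'] using hmem q
    all_goals (injection hpc with hn hl; subst hn; simp_all)
  | jump hι₁ =>
    rename_i μ σ n nt Lpc L₁
    cases h₂
    case jump =>
      rename_i μ' σ' n' nt' Lpc' L₁' hι₂
      injection hpc with hn hl; subst hn; subst hl
      dsimp only at hL1 hL2 hstk hmem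
      obtain ⟨he1, hsA⟩ := List.forall₂_cons.1 hstk
      cases he1 with | data ha1 =>
      refine ⟨Or.inl rfl, ?_⟩
      rcases ha1 with heq | ⟨hh1, hh2⟩
      · injection heq with e1 e2; subst e1; subst e2
        by_cases hL : L₁ ⊔ Lpc ≤ o
        · exact Or.inl ⟨hL, hL, rfl, hsA, hmem⟩
        · exact Or.inr ⟨hL, hL, hmem, stkFilter_indist hsA⟩
      · exact Or.inr ⟨notLeSupL hh1, notLeSupL hh2, hmem, stkFilter_indist hsA⟩
    all_goals (injection hpc with hn hl; subst hn; simp_all)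
  | bnz hι₁ =>
    rename_i μ σ n m k Lpc L₁
    cases h₂
    case bnz =>
      rename_i μ' σ' n' m' k' Lpc' L₁' hι₂
      injection hpc with hn hl; subst hn; subst hl
      dsimp only at hL1 hL2 hstk hmem
      rw [hι₁] at hι₂
      injection hι₂ with h; injection h with h; subst h
      obtain ⟨he1, hsA⟩ := List.forall₂_cons.1 hstk
      cases he1 with | data ha1 =>
      refine ⟨Or.inl rfl, ?_⟩
      rcases ha1 with heq | ⟨hh1, hh2⟩
      · injection heq with e1 e2; subst e1; subst e2
        by_cases hL : L₁ ⊔ Lpc ≤ o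
        · exact Or.inl ⟨hL, hL, rfl, hsA, hmem⟩
        · exact Or.inr ⟨hL, hL, hmem, stkFilter_indist hsA⟩
      · exact Or.inr ⟨notLeSupL hh1, notLeSupL hh2, hmem, stkFilter_indist hsA⟩
    all_goals (injection hpc with hn hl; subst hn; simp_all)
  | call hι₁ =>
    rename_i μ σ n nt Lpc L₁
    cases h₂
    case call =>
      rename_i μ' σ' n' nt' Lpc' L₁' hι₂
      injection hpc with hn hl; subst hn; subst hl
      dsimp only at hL1 hL2 hstk hmem
      obtain ⟨he1, hsA⟩ := List.forall₂_cons.1 hstk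
      cases he1 with | data ha1 =>
      refine ⟨Or.inl rfl, ?_⟩
      have hLpc : Lpc ≤ o := hL1
      have hfilt : List.Forall₂ (EltIndist o)
          (stkFilter o (.ret ⟨n + 1, Lpc⟩ :: σ)) (stkFilter o (.ret ⟨n + 1, Lpc⟩ :: σ')) := by
        rw [stkFilter_ret_low hLpc, stkFilter_ret_low hLpc]
        exact List.Forall₂.cons (.ret (Or.inl rfl)) hsA
      rcases ha1 with heq | ⟨hh1, hh2⟩
      · injection heq with e1 e2; subst e1; subst e2
        by_cases hL : L₁ ⊔ Lpc ≤ o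
        · exact Or.inl ⟨hL, hL, rfl, List.Forall₂.cons (.ret (Or.inl rfl)) hsA, hmem⟩
        · exact Or.inr ⟨hL, hL, hmem, hfilt⟩
      · exact Or.inr ⟨notLeSupL hh1, notLeSupL hh2, hmem, hfilt⟩
    all_goals (injection hpc with hn hl; subst hn; simp_all)
  | ret hι₁ =>
    rename_i μ σ n Lpc pc'
    cases h₂
    case ret =>
      rename_i μ' σ' n' Lpc' pc'' hι₂
      injection hpc with hn hl; subst hn; subst hl
      dsimp only at hL1 hL2 hstk hmem
      obtain ⟨he1, hsA⟩ := List.forall₂_cons.1 hstk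
      cases he1 with | ret ha1 =>
      refine ⟨Or.inl rfl, ?_⟩
      rcases ha1 with rfl | ⟨hh1, hh2⟩
      · by_cases hL : pc'.lab ≤ o
        · exact Or.inl ⟨hL, hL, rfl, hsA, hmem⟩
        · exact Or.inr ⟨hL, hL, hmem, stkFilter_indist hsA⟩
      · exact Or.inr ⟨hh1, hh2, hmem, stkFilter_indist hsA⟩
    all_goals (injection hpc with hn hl; subst hn; simp_all)
  | output hι₁ =>
    rename_i μ σ n m Lpc L₁
    cases h₂
    case output =>
      rename_i μ' σ' n' m' Lpc' L₁' hι₂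
      injection hpc with hn hl; subst hn; subst hl
      dsimp only at hL1 hL2 hstk hmem
      obtain ⟨he1, hsA⟩ := List.forall₂_cons.1 hstk
      cases he1 with | data ha1 =>
      refine ⟨?_, Or.inl ⟨hL1, hL1, rfl, hsA, hmem⟩⟩
      rcases ha1 with heq | ⟨hh1, hh2⟩
      · injection heq with e1 e2; subst e1; subst e2; exact Or.inl rfl
      · refine Or.inr ⟨?_, ?_⟩
        · rintro ⟨e, he, hle⟩
          cases he
          exact notLeSupL hh1 hle
        · rintro ⟨e, he, hle⟩
          cases he
          exact notLeSupL hh2 hle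
    all_goals (injection hpc with hn hl; subst hn; simp_all)
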